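/- arXiv:1504.07139 — 4 statements merged into one kernel-verified Lean document; each statement's English description precedes it below -/
import Mathlib

section
/- Let p be a probability kernel on ℤ^d whose support generates ℤ^d as a group (strongly aperiodic after any translation). Then every bounded function h : ℤ^d → ℝ satisfying h(x) = ∑_y p(y-x) h(y) for all x is constant. -/
/-!
Choquet–Deny argument. Fix `z` in the support of `p` and let `s` be the supremum of
`u x = h (x + z) - h x`. Pointwise limits of translates `h (· + a)` along a maximizing net
of `u` (which exist by Tychonoff) are again bounded harmonic functions `g`, and for a suitable
one `v = g (· + z) - g` is harmonic and attains its maximum `s` at `0`. The maximum principle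
gives `v (k • z) = s` for every `k`, so `g (k • z) = g 0 + k * s`, and boundedness forces
`s ≤ 0`. Applied to `h` and `-h`, every `z` in the support of `p` is a period of `h`, and these
generate the whole group.
-/

open Filter Topology Function

def periodAddSubgroup {A α : Type*} [AddGroup A] (h : A → α) : AddSubgroup A where
  carrier := {c | Periodic h c}
  zero_mem' := periodic_with_period_zero h
  add_mem' := Periodic.add_period
  neg_mem' := Periodic.neg

lemma nonpos_of_bounded_of_apply_nsmul_add_sub {A : Type*} [AddMonoid A] {h : A → ℝ}
    {M s : ℝ} {z : A} (hb : ∀ x, |h x| ≤ M) (hstep : ∀ k : ℕ, h (k • z + z) - h (k • z) = s) :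
    s ≤ 0 := by
  have hlin : ∀ k : ℕ, h (k • z) = h 0 + k * s := by
    intro k
    induction k with
    | zero => simp
    | succ k ih =>
      rw [succ_nsmul, ← sub_add_cancel (h _) (h (k • z)), hstep, ih]
      push_cast
      ring
  by_contra! hs
  obtain ⟨k, hk⟩ := exists_nat_gt (2 * M / s)
  linarith [(div_lt_iff₀ hs).1 hk, hlin k, abs_le.1 (hb (k • z)), abs_le.1 (hb 0)]

lemma exists_ultrafilter_tendsto_of_bounded {ι X : Type*} {F : ι → X → ℝ} {M : ℝ}
    (hF : ∀ i x, |F i x| ≤ M) (l : Filter ι) [l.NeBot] :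
    ∃ U : Ultrafilter ι, ↑U ≤ l ∧ ∃ g, Tendsto F U (𝓝 g) := by
  have hK : IsCompact (Set.univ.pi fun _ : X => Set.Icc (-M) M) :=
    isCompact_univ_pi fun _ => isCompact_Icc
  have hFK : ↑(Ultrafilter.map F (.of l)) ≤ 𝓟 (Set.univ.pi fun _ : X => Set.Icc (-M) M) := by
    rw [Ultrafilter.coe_map, le_principal_iff, mem_map]
    exact Eventually.of_forall fun i => Set.mem_univ_pi.2 fun x => abs_le.1 (hF i x)
  obtain ⟨g, -, hg⟩ := hK.ultrafilter_le_nhds _ hFK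
  exact ⟨.of l, Ultrafilter.of_le l, g, hg⟩

variable {G : Type*} [AddCommGroup G]

def IsHarmonic (p : G → ℝ) (T : Finset G) (h : G → ℝ) : Prop :=
  ∀ x, h x = ∑ z ∈ T, p z * h (x + z)

lemma isHarmonic_of_tsum {p h : G → ℝ} {T : Finset G} (hsupp : support p ⊆ T)
    (hh : ∀ x, h x = ∑' y, p (y - x) * h y) : IsHarmonic p T h := fun x => by
  rw [hh x, ← (Equiv.addLeft x).tsum_eq]
  simp only [Equiv.coe_addLeft, add_sub_cancel_left]
  exact tsum_eq_sum' ((support_mul_subset_left _ _).trans hsupp)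

namespace IsHarmonic

variable {p : G → ℝ} {T : Finset G} {g h : G → ℝ}

lemma neg (hh : IsHarmonic p T h) : IsHarmonic p T (-h) := fun x => by
  simp only [Pi.neg_apply, hh x, mul_neg, Finset.sum_neg_distrib]

lemma sub (hg : IsHarmonic p T g) (hh : IsHarmonic p T h) : IsHarmonic p T (g - h) :=
  fun x => by simp only [Pi.sub_apply, hg x, hh x, mul_sub, Finset.sum_sub_distrib]

lemma comp_add_right (hh : IsHarmonic p T h) (a : G) : IsHarmonic p T (fun x => h (x + a)) :=
  fun x => by simp only [hh (x + a), add_right_comm x a]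

lemma isClosed_setOf (p : G → ℝ) (T : Finset G) : IsClosed {h : G → ℝ | IsHarmonic p T h} := by
  simp only [IsHarmonic, Set.ofPred_forall]
  exact isClosed_iInter fun x => isClosed_eq (continuous_apply x)
    (continuous_finsetSum _ fun z _ => continuous_const.mul (continuous_apply _))

variable (hnn : ∀ z, 0 ≤ p z) (hT : ∑ z ∈ T, p z = 1)
include hnn hT

lemma apply_add_eq_of_le {s : ℝ} {w z : G} (hh : IsHarmonic p T h) (hle : ∀ x, h x ≤ s)
    (hw : h w = s) (hz : z ∈ T) (hpz : 0 < p z) : h (w + z) = s := by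
  have hsum : ∑ z' ∈ T, p z' * (s - h (w + z')) = 0 := by
    simp only [mul_sub, Finset.sum_sub_distrib, ← Finset.sum_mul, hT, one_mul, ← hh w, hw,
      sub_self]
  have hzero := (Finset.sum_eq_zero_iff_of_nonneg fun z' _ =>
    mul_nonneg (hnn z') (sub_nonneg.2 (hle _))).1 hsum z hz
  linarith [(mul_eq_zero.1 hzero).resolve_left hpz.ne']

lemma apply_add_le {M : ℝ} {z : G} (hh : IsHarmonic p T h) (hb : ∀ x, |h x| ≤ M) (hz : z ∈ T)
    (hpz : 0 < p z) (x : G) : h (x + z) ≤ h x := by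
  set u : G → ℝ := fun x => h (x + z) - h x
  have hu : BddAbove (Set.range u) :=
    ⟨2 * M, by rintro _ ⟨x, rfl⟩; linarith [abs_le.1 (hb (x + z)), abs_le.1 (hb x)]⟩
  set s := ⨆ x, u x
  suffices s ≤ 0 by linarith [le_ciSup hu x]
  have : (comap u (𝓝 s)).NeBot := comap_neBot_iff.2 fun t ht => by
    obtain ⟨_, hut, x, rfl⟩ :=
      mem_closure_iff_nhds.1 (csSup_mem_closure (Set.range_nonempty u) hu) t ht
    exact ⟨x, hut⟩
  obtain ⟨U, hU, g, hg⟩ := exists_ultrafilter_tendsto_of_bounded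
    (F := fun a x => h (x + a)) (fun a x => hb _) (comap u (𝓝 s))
  have hgx : ∀ x, Tendsto (fun a => h (x + a)) U (𝓝 (g x)) := tendsto_pi_nhds.1 hg
  set v : G → ℝ := fun x => g (x + z) - g x
  have hv : ∀ x, Tendsto (fun a => u (x + a)) U (𝓝 (v x)) := fun x => by
    simpa only [u, add_right_comm x _ z] using (hgx (x + z)).sub (hgx x)
  have hgh : IsHarmonic p T g := (isClosed_setOf p T).mem_of_tendsto hg
    (Eventually.of_forall fun a => hh.comp_add_right a)
  have hvh : IsHarmonic p T v := (hgh.comp_add_right z).sub hgh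
  have hvs : ∀ x, v x ≤ s := fun x => le_of_tendsto' (hv x) fun a => le_ciSup hu _
  have hv0 : v 0 = s := tendsto_nhds_unique (hv 0) <| by
    simpa only [zero_add] using tendsto_comap.mono_left hU
  have hvk : ∀ k : ℕ, v (k • z) = s := by
    intro k
    induction k with
    | zero => simpa using hv0
    | succ k ih => rw [succ_nsmul]; exact apply_add_eq_of_le hnn hT hvh hvs ih hz hpz
  refine nonpos_of_bounded_of_apply_nsmul_add_sub (h := g) (z := z) (M := M) ?_ hvk
  exact fun x => le_of_tendsto' (hgx x).abs fun a => hb _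

lemma periodic {M : ℝ} {z : G} (hh : IsHarmonic p T h) (hb : ∀ x, |h x| ≤ M) (hz : z ∈ T)
    (hpz : 0 < p z) : Periodic h z := fun x =>
  le_antisymm (hh.apply_add_le hnn hT hb hz hpz x) <| by
    simpa using hh.neg.apply_add_le hnn hT (M := M) (by simpa using hb) hz hpz x

lemma apply_eq_of_closure_eq_top {M : ℝ} (hh : IsHarmonic p T h) (hb : ∀ x, |h x| ≤ M)
    (hsupp : ∀ z, 0 < p z → z ∈ T) (hgen : AddSubgroup.closure {z | 0 < p z} = ⊤) (x y : G) :
    h x = h y := by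
  have htop : periodAddSubgroup h = ⊤ := top_unique <| hgen ▸ (AddSubgroup.closure_le _).2
    fun z hpz => hh.periodic hnn hT hb (hsupp z hpz) hpz
  have hyx : y - x ∈ periodAddSubgroup h := htop ▸ AddSubgroup.mem_top (y - x)
  simpa using (hyx x).symm

end IsHarmonic

theorem bounded_harmonic_constant_general {d : ℕ}
    (p : (Fin d → ℤ) → ℝ)
    (hfin : (Function.support p).Finite)
    (hnn : ∀ x, 0 ≤ p x)
    (hsum : ∑' x, p x = 1)
    (hgen : ∀ u : Fin d → ℤ,
      AddSubgroup.closure {y : Fin d → ℤ | ∃ x, 0 < p x ∧ y = u + x} = ⊤)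
    (h : (Fin d → ℤ) → ℝ)
    (hb : ∃ M, ∀ x, |h x| ≤ M)
    (hharm : ∀ x, h x = ∑' y, p (y - x) * h y) :
    ∀ x y, h x = h y := by
  obtain ⟨M, hM⟩ := hb
  have hsupp : support p ⊆ hfin.toFinset := hfin.coe_toFinset.symm.subset
  have hT : ∑ z ∈ hfin.toFinset, p z = 1 := hsum ▸ (tsum_eq_sum' hsupp).symm
  refine (isHarmonic_of_tsum hsupp hharm).apply_eq_of_closure_eq_top hnn hT hM
    (fun z hz => hsupp hz.ne') ?_
  simpa using hgen 0

/-- Bounded harmonic functions of a strongly aperiodic random walk kernel on `ℤ^d`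
are constant. -/
theorem bounded_harmonic_constant {d : ℕ}
    (p : (Fin d → ℤ) → ℝ)
    (hfin : (Function.support p).Finite)
    (hnn : ∀ x, 0 ≤ p x) (hlt : ∀ x, p x < 1)
    (hsum : ∑' x, p x = 1)
    (hgen : ∀ u : Fin d → ℤ,
      AddSubgroup.closure {y : Fin d → ℤ | ∃ x, 0 < p x ∧ y = u + x} = ⊤)
    (h : (Fin d → ℤ) → ℝ)
    (hb : ∃ M, ∀ x, |h x| ≤ M)
    (hharm : ∀ x, h x = ∑' y, p (y - x) * h y) :
    ∀ x y, h x = h y :=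
  bounded_harmonic_constant_general p hfin hnn hsum hgen h hb hharm
end

section
/- For a strongly aperiodic, finitely supported random walk kernel p on ℤ^d with symmetrization q(x,y)=∑_z p(0,z)p(x,y+z), the second moment of the stationary increment Δ_0(x,y) = ∑_{k≥0} ∑_z ξ_{-k}(z)(p^k(y,z)−p^k(x,z)), where ξ are i.i.d. centered with variance σ_ξ², equals 2σ_ξ² a(x−y), where a(x) = ∑_{k≥0}[q^k(0,0) − q^k(x,0)] is the potential kernel of q. -/
/-!
`Δ` is the `L²` limit of the partial sums `S_m`, so `E[Δ²] = lim E[S_m²]`. The `ξ_k(z)` are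
pairwise independent and centred, so `E[S_m²] = σ² ∑_{k<m} ∑_z (p^k(y,z) − p^k(x,z))²`.
In the group algebra `ℝ[ℤ^d]` the symmetrization is `q = P · P̌` with `P̌(z) = P(−z)`, hence by
commutativity `q^k = P^k · (P^k)ˇ`, and expanding the square gives
`∑_z (p^k(y,z) − p^k(x,z))² = 2 (q^k(0) − q^k(x−y))`. These terms are nonnegative and their
partial sums converge, so they sum to `2 a(x−y)`.
-/

open MeasureTheory ProbabilityTheory Filter Function Finset
open scoped Topology

/-- `k`-step transition weights: `iterK p k x` is the probability of moving from
`0` to `x` in `k` steps, so that `p^k(x,y) = iterK p k (y - x)`. -/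
noncomputable def iterK {d : ℕ} (p : (Fin d → ℤ) → ℝ) : ℕ → (Fin d → ℤ) → ℝ
  | 0 => fun x => if x = 0 then 1 else 0
  | (k+1) => fun x => ∑' z, p z * iterK p k (x - z)

namespace AddMonoidAlgebra

variable {G : Type*} [AddCommGroup G]

lemma coeff_mul_eq_tsum (f g : AddMonoidAlgebra ℝ G) (x : G) :
    (f * g).coeff x = ∑' z, f.coeff z * g.coeff (x - z) := by
  classical
  rw [coeff_mul, Finsupp.sum, tsum_eq_sum' (s := f.coeff.support)]
  · refine Finset.sum_congr rfl fun z _ => ?_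
    rw [Finsupp.sum, Finset.sum_eq_single (x - z)]
    · simp
    · intro w _ hw
      rw [if_neg fun h => hw (by rw [← h]; abel)]
    · intro h
      simp [Finsupp.notMem_support_iff.mp h]
  · exact support_subset_iff'.2 fun z hz => by simp [Finsupp.notMem_support_iff.mp hz]

noncomputable def reflect : AddMonoidAlgebra ℝ G ≃ₐ[ℝ] AddMonoidAlgebra ℝ G :=
  domCongr ℝ ℝ (AddEquiv.neg G)

@[simp]
lemma coeff_reflect (f : AddMonoidAlgebra ℝ G) (x : G) :
    (reflect f).coeff x = f.coeff (-x) := by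
  simp [reflect]

@[simp]
lemma reflect_reflect (f : AddMonoidAlgebra ℝ G) : reflect (reflect f) = f := by
  ext x
  simp

lemma coeff_mul_reflect_self_neg (f : AddMonoidAlgebra ℝ G) (x : G) :
    (f * reflect f).coeff (-x) = (f * reflect f).coeff x := by
  rw [← coeff_reflect, map_mul, reflect_reflect, mul_comm]

lemma tsum_coeff_sub_mul_coeff_sub (f g : AddMonoidAlgebra ℝ G) (x y : G) :
    ∑' z, f.coeff (z - y) * g.coeff (z - x) = (f * reflect g).coeff (x - y) := by
  rw [coeff_mul_eq_tsum, ← (Equiv.addRight y).tsum_eq]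
  congr 1 with u
  simp only [Equiv.coe_addRight, coeff_reflect]
  congr 2 <;> abel

lemma summable_coeff_sub_mul_coeff_sub (f g : AddMonoidAlgebra ℝ G) (x y : G) :
    Summable fun z => f.coeff (z - y) * g.coeff (z - x) := by
  refine summable_of_hasFiniteSupport ((f.coeff.hasFiniteSupport.image (· + y)).subset ?_)
  intro z hz
  exact ⟨z - y, left_ne_zero_of_mul hz, sub_add_cancel z y⟩

lemma tsum_sq_coeff_sub_sub (f : AddMonoidAlgebra ℝ G) (x y : G) :
    ∑' z, (f.coeff (z - y) - f.coeff (z - x)) ^ 2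
      = 2 * ((f * reflect f).coeff 0 - (f * reflect f).coeff (x - y)) := by
  have hsum := summable_coeff_sub_mul_coeff_sub f f
  calc ∑' z, (f.coeff (z - y) - f.coeff (z - x)) ^ 2
      = ∑' z, (f.coeff (z - y) * f.coeff (z - y) - 2 * (f.coeff (z - y) * f.coeff (z - x))
          + f.coeff (z - x) * f.coeff (z - x)) := by
        congr 1 with z
        ring
    _ = ∑' z, f.coeff (z - y) * f.coeff (z - y) - 2 * ∑' z, f.coeff (z - y) * f.coeff (z - x)
          + ∑' z, f.coeff (z - x) * f.coeff (z - x) := by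
        rw [((hsum y y).sub ((hsum x y).mul_left 2)).tsum_add (hsum x x),
          (hsum y y).tsum_sub ((hsum x y).mul_left 2), tsum_mul_left]
    _ = 2 * ((f * reflect f).coeff 0 - (f * reflect f).coeff (x - y)) := by
      simp only [tsum_coeff_sub_mul_coeff_sub, sub_self]
      ring

end AddMonoidAlgebra

open AddMonoidAlgebra

section iterK

variable {d : ℕ}

lemma iterK_coeff_eq_coeff_pow (f : AddMonoidAlgebra ℝ (Fin d → ℤ)) :
    ∀ k, iterK f.coeff k = ⇑(f ^ k).coeff
  | 0 => by
    ext x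
    simp [iterK, AddMonoidAlgebra.one_def, Finsupp.single_apply, eq_comm]
  | k + 1 => by
    ext x
    rw [iterK, pow_succ', coeff_mul_eq_tsum, iterK_coeff_eq_coeff_pow f k]

lemma iterK_eq_coeff_pow {p : (Fin d → ℤ) → ℝ} (hfin : (support p).Finite) (k : ℕ) :
    iterK p k = ⇑(ofCoeff (Finsupp.ofSupportFinite p hfin) ^ k).coeff :=
  iterK_coeff_eq_coeff_pow (ofCoeff (Finsupp.ofSupportFinite p hfin)) k

lemma finite_support_iterK_sub_iterK {p : (Fin d → ℤ) → ℝ} (hfin : (support p).Finite)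
    (k : ℕ) (x y : Fin d → ℤ) :
    (support fun z => iterK p k (z - y) - iterK p k (z - x)).Finite := by
  have hk : (support (iterK p k)).Finite := by
    rw [iterK_eq_coeff_pow hfin]
    exact Finsupp.hasFiniteSupport _
  exact ((hk.preimage sub_left_injective.injOn).union
    (hk.preimage sub_left_injective.injOn)).subset (support_sub _ _)

lemma tsum_sq_iterK_sub_iterK {p q : (Fin d → ℤ) → ℝ} (hfin : (support p).Finite)
    (hq : ∀ x, q x = ∑' z, p z * p (x + z)) (k : ℕ) (x y : Fin d → ℤ) :
    ∑' z, (iterK p k (z - y) - iterK p k (z - x)) ^ 2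
      = 2 * (iterK q k 0 - iterK q k (x - y)) := by
  set P := ofCoeff (Finsupp.ofSupportFinite p hfin)
  have hP : ⇑P.coeff = p := Finsupp.ofSupportFinite_coe
  -- `q w = (P * reflect P).coeff (-w)`, and `P * reflect P` is even
  have hqP : q = ⇑(P * reflect P).coeff := by
    ext w
    rw [hq, ← coeff_mul_reflect_self_neg, ← sub_zero (-w), ← tsum_coeff_sub_mul_coeff_sub, hP]
    simp [add_comm]
  rw [iterK_eq_coeff_pow hfin, hqP, iterK_coeff_eq_coeff_pow, mul_pow, ← map_pow]
  exact tsum_sq_coeff_sub_sub _ x y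

end iterK

section SecondMoment

variable {Ω : Type*} [MeasurableSpace Ω] {μ : Measure Ω}

lemma integral_sq_sum_mul_of_pairwise_indepFun [IsFiniteMeasure μ] {ι : Type*}
    {ξ : ι → Ω → ℝ} {σ2 : ℝ}
    (hL2 : ∀ i, MemLp (ξ i) 2 μ) (hmean : ∀ i, ∫ ω, ξ i ω ∂μ = 0)
    (hvar : ∀ i, ∫ ω, ξ i ω ^ 2 ∂μ = σ2) (hind : Pairwise fun i j => IndepFun (ξ i) (ξ j) μ)
    (s : Finset ι) (c : ι → ℝ) :
    ∫ ω, (∑ i ∈ s, ξ i ω * c i) ^ 2 ∂μ = σ2 * ∑ i ∈ s, c i ^ 2 := by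
  set X : ι → Ω → ℝ := fun i ω => ξ i ω * c i
  have hX : ∀ i, MemLp (X i) 2 μ := fun i => (hL2 i).mul_const (c i)
  have hsum : (fun ω => ∑ i ∈ s, X i ω) = ∑ i ∈ s, X i := by
    ext ω
    simp
  have hmean_sum : ∫ ω, ∑ i ∈ s, X i ω ∂μ = 0 := by
    rw [integral_finsetSum s fun i _ => (hX i).integrable one_le_two]
    simp [X, integral_mul_const, hmean]
  have hvar_X : ∀ i, Var[X i; μ] = σ2 * c i ^ 2 := fun i => by
    rw [variance_mul_const, variance_of_integral_eq_zero (hL2 i).aemeasurable (hmean i), hvar]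
  rw [← variance_of_integral_eq_zero (memLp_finsetSum s fun i _ => hX i).aemeasurable hmean_sum,
    hsum, IndepFun.variance_sum (fun i _ => hX i)
      fun i _ j _ hij => (hind hij).comp (measurable_id.mul_const _) (measurable_id.mul_const _)]
  simp [hvar_X, Finset.mul_sum]

variable {α β : Type*} {ξ : α → β → Ω → ℝ}

lemma exists_finset_forall_support_subset {M : Type*} [Zero M] (K : Finset α) {c : α → β → M}
    (hc : ∀ a, (support (c a)).Finite) : ∃ T : Finset β, ∀ a ∈ K, support (c a) ⊆ T :=
  ⟨(K.finite_toSet.biUnion fun a _ => hc a).toFinset, fun a ha => by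
    simpa using Set.subset_biUnion_of_mem (u := fun a => support (c a)) ha⟩

lemma sum_tsum_eq_sum_product {M : Type*} [AddCommMonoid M] [TopologicalSpace M]
    {K : Finset α} {T : Finset β} {f : α → β → M} (hf : ∀ a ∈ K, support (f a) ⊆ T) :
    ∑ a ∈ K, ∑' b, f a b = ∑ i ∈ K ×ˢ T, f i.1 i.2 := by
  rw [Finset.sum_product]
  exact Finset.sum_congr rfl fun a ha => tsum_eq_sum' (hf a ha)

lemma memLp_sum_tsum_mul (hL2 : ∀ a b, MemLp (ξ a b) 2 μ) (K : Finset α) {c : α → β → ℝ}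
    (hc : ∀ a, (support (c a)).Finite) :
    MemLp (fun ω => ∑ a ∈ K, ∑' b, ξ a b ω * c a b) 2 μ := by
  obtain ⟨T, hT⟩ := exists_finset_forall_support_subset K hc
  simp_rw [sum_tsum_eq_sum_product fun a ha => (support_mul_subset_right _ _).trans (hT a ha)]
  exact memLp_finsetSum _ fun i _ => (hL2 i.1 i.2).mul_const _

lemma integral_sq_sum_tsum_mul [IsFiniteMeasure μ] {σ2 : ℝ} (hL2 : ∀ a b, MemLp (ξ a b) 2 μ)
    (hmean : ∀ a b, ∫ ω, ξ a b ω ∂μ = 0) (hvar : ∀ a b, ∫ ω, ξ a b ω ^ 2 ∂μ = σ2)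
    (hind : Pairwise fun i j : α × β => IndepFun (ξ i.1 i.2) (ξ j.1 j.2) μ)
    (K : Finset α) {c : α → β → ℝ} (hc : ∀ a, (support (c a)).Finite) :
    ∫ ω, (∑ a ∈ K, ∑' b, ξ a b ω * c a b) ^ 2 ∂μ = σ2 * ∑ a ∈ K, ∑' b, c a b ^ 2 := by
  obtain ⟨T, hT⟩ := exists_finset_forall_support_subset K hc
  simp_rw [sum_tsum_eq_sum_product fun a ha => (support_mul_subset_right _ _).trans (hT a ha),
    sum_tsum_eq_sum_product fun a ha => (support_pow (c a) two_ne_zero).subset.trans (hT a ha)]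
  exact integral_sq_sum_mul_of_pairwise_indepFun (ξ := fun i : α × β => ξ i.1 i.2)
    (fun i => hL2 i.1 i.2) (fun i => hmean i.1 i.2) (fun i => hvar i.1 i.2) hind _ _

lemma integral_sq_eq_norm_toLp_sq {f : Ω → ℝ} (hf : MemLp f 2 μ) :
    ∫ ω, f ω ^ 2 ∂μ = ‖hf.toLp f‖ ^ 2 := by
  rw [← real_inner_self_eq_norm_sq, L2.inner_def]
  refine integral_congr_ae ?_
  filter_upwards [hf.coeFn_toLp] with ω hω
  simp [hω, sq]

lemma tendsto_integral_sq_of_tendsto_eLpNorm {ι : Type*} {l : Filter ι} {S : ι → Ω → ℝ}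
    {Δ : Ω → ℝ} (hS : ∀ m, MemLp (S m) 2 μ) (hΔ : MemLp Δ 2 μ)
    (hlim : Tendsto (fun m => eLpNorm (fun ω => S m ω - Δ ω) 2 μ) l (𝓝 0)) :
    Tendsto (fun m => ∫ ω, S m ω ^ 2 ∂μ) l (𝓝 (∫ ω, Δ ω ^ 2 ∂μ)) := by
  have hLp := (Lp.tendsto_Lp_iff_tendsto_eLpNorm'' S hS Δ hΔ).2 hlim
  simp_rw [integral_sq_eq_norm_toLp_sq (hS _), integral_sq_eq_norm_toLp_sq hΔ]
  exact hLp.norm.pow 2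

end SecondMoment

lemma eq_mul_tsum_of_tendsto_mul_sum_range {f : ℕ → ℝ} (hf : ∀ k, 0 ≤ f k) {c L : ℝ}
    (h : Tendsto (fun m => c * ∑ k ∈ range m, f k) atTop (𝓝 L)) : L = c * ∑' k, f k := by
  rcases eq_or_ne c 0 with rfl | hc
  · simpa using tendsto_nhds_unique h (by simp)
  · have hpartial : Tendsto (fun m => ∑ k ∈ range m, f k) atTop (𝓝 (L / c)) := by
      simpa [div_eq_inv_mul, inv_mul_cancel_left₀ hc] using h.const_mul c⁻¹
    rw [((hasSum_iff_tendsto_nat_of_nonneg hf _).2 hpartial).tsum_eq]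
    field_simp

theorem increment_second_moment_general {d : ℕ}
    (p : (Fin d → ℤ) → ℝ)
    (hfin : (Function.support p).Finite)
    (q : (Fin d → ℤ) → ℝ) (hq : ∀ x, q x = ∑' z, p z * p (x + z))
    (a : (Fin d → ℤ) → ℝ)
    (ha : ∀ x, a x = ∑' k : ℕ, (iterK q k 0 - iterK q k x))
    {Ω : Type*} [MeasureSpace Ω] [IsProbabilityMeasure (ℙ : Measure Ω)]
    (ξ : ℕ → (Fin d → ℤ) → Ω → ℝ)
    (hind : iIndepFun
        (fun kz : ℕ × (Fin d → ℤ) => ξ kz.1 kz.2))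
    (hident : ∀ k z, IdentDistrib (ξ k z) (ξ 0 0))
    (hmean : ∫ ω, ξ 0 0 ω = 0)
    (hL2 : MemLp (ξ 0 0) 2)
    (σξ2 : ℝ) (hvar : ∫ ω, (ξ 0 0 ω)^2 = σξ2)
    (x y : Fin d → ℤ)
    (Δ : Ω → ℝ) (hΔ : MemLp Δ 2)
    (hlim : Tendsto (fun m : ℕ =>
        eLpNorm (fun ω =>
          (∑ k ∈ Finset.range m,
            ∑' z, ξ k z ω * (iterK p k (z - y) - iterK p k (z - x))) - Δ ω) 2 ℙ)
      atTop (nhds 0)) :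
    ∫ ω, (Δ ω)^2 = 2 * σξ2 * a (x - y) := by
  have hξL2 : ∀ k z, MemLp (ξ k z) 2 := fun k z => (hident k z).symm.memLp_snd hL2
  have hξmean : ∀ k z, ∫ ω, ξ k z ω = 0 := fun k z => (hident k z).integral_eq.trans hmean
  have hξvar : ∀ k z, ∫ ω, ξ k z ω ^ 2 = σξ2 := fun k z =>
    ((hident k z).comp (measurable_id.pow_const 2)).integral_eq.trans hvar
  have hc := finite_support_iterK_sub_iterK hfin (x := x) (y := y)
  have hmoments := tendsto_integral_sq_of_tendsto_eLpNorm
    (fun m => memLp_sum_tsum_mul hξL2 (range m) hc) hΔ hlim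
  simp_rw [integral_sq_sum_tsum_mul hξL2 hξmean hξvar (fun _ _ hij => hind.indepFun hij) _ hc,
    tsum_sq_iterK_sub_iterK hfin hq] at hmoments
  have hnonneg : ∀ k, 0 ≤ 2 * (iterK q k 0 - iterK q k (x - y)) := fun k => by
    rw [← tsum_sq_iterK_sub_iterK hfin hq]
    exact tsum_nonneg fun z => sq_nonneg _
  rw [eq_mul_tsum_of_tendsto_mul_sum_range hnonneg hmoments, tsum_mul_left, ha]
  ring

/-- Second moment of the stationary increment
`Δ_0(x,y) = ∑_{k≥0} ∑_z ξ_{-k}(z) (p^k(y,z) − p^k(x,z))` of the harness process: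
it equals `2 σ_ξ² a(x−y)` where `a` is the potential kernel of the symmetrization
`q` of `p`. Here `Δ` is given as the `L²` limit of the partial sums over `k`. -/
theorem increment_second_moment {d : ℕ}
    (p : (Fin d → ℤ) → ℝ)
    (hfin : (Function.support p).Finite)
    (hnn : ∀ x, 0 ≤ p x) (hsum : ∑' x, p x = 1)
    (hgen : ∀ u : Fin d → ℤ,
      AddSubgroup.closure {y : Fin d → ℤ | ∃ x, 0 < p x ∧ y = u + x} = ⊤)
    (q : (Fin d → ℤ) → ℝ) (hq : ∀ x, q x = ∑' z, p z * p (x + z))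
    (a : (Fin d → ℤ) → ℝ)
    (ha : ∀ x, a x = ∑' k : ℕ, (iterK q k 0 - iterK q k x))
    {Ω : Type*} [MeasureSpace Ω] [IsProbabilityMeasure (ℙ : Measure Ω)]
    (ξ : ℕ → (Fin d → ℤ) → Ω → ℝ)
    (hmeas : ∀ k z, Measurable (ξ k z))
    (hind : iIndepFun
        (fun kz : ℕ × (Fin d → ℤ) => ξ kz.1 kz.2))
    (hident : ∀ k z, IdentDistrib (ξ k z) (ξ 0 0))
    (hmean : ∫ ω, ξ 0 0 ω = 0)
    (hL2 : MemLp (ξ 0 0) 2)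
    (σξ2 : ℝ) (hvar : ∫ ω, (ξ 0 0 ω)^2 = σξ2)
    (x y : Fin d → ℤ)
    (Δ : Ω → ℝ) (hΔ : MemLp Δ 2)
    (hlim : Tendsto (fun m : ℕ =>
        eLpNorm (fun ω =>
          (∑ k ∈ Finset.range m,
            ∑' z, ξ k z ω * (iterK p k (z - y) - iterK p k (z - x))) - Δ ω) 2 ℙ)
      atTop (nhds 0)) :
    ∫ ω, (Δ ω)^2 = 2 * σξ2 * a (x - y) :=
  increment_second_moment_general p hfin q hq a ha ξ hind hident hmean hL2 σξ2 hvar x y Δ hΔ hlim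
end

section
/- With Ψ as above, for s,t > 0 and q,r ∈ ℝ: ∫_{−∞}^0 P(B_{σ²s} > q−x) P(B_{σ²t} > r−x) dx + ∫_0^∞ P(B_{σ²s} ≤ q−x) P(B_{σ²t} ≤ r−x) dx = Ψ_{σ²s}(−q) + Ψ_{σ²t}(r) − Ψ_{σ²(t+s)}(r−q). -/
/-!
Let `Y ~ N(0, σ²s)` and `Z ~ N(0, σ²t)` be independent. By the layer-cake formula the two
integrals are `E[(min (Y - q) (Z - r))⁺]` and `E[(min (q - Y) (r - Z))⁺]`. The pointwise
identity `(min a b)⁺ + (min (-a) (-b))⁺ + (b - a)⁺ = (-a)⁺ + b⁺` turns their sum into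
`E[(q - Y)⁺] + E[(Z - r)⁺] - E[(Z - Y - (r - q))⁺]`, and `E[(X - c)⁺] = Ψ_v(c)` for
`X ~ N(0, v)`, while `Z - Y ~ N(0, σ²(t + s))`.
-/

open MeasureTheory Real

noncomputable def gpdf (v x : ℝ) : ℝ :=
  (2 * π * v) ^ (-(1/2 : ℝ)) * Real.exp (-(x^2) / (2 * v))

noncomputable def gcdf (v x : ℝ) : ℝ := ∫ y in Set.Iic x, gpdf v y

noncomputable def gPsi (v x : ℝ) : ℝ := v * gpdf v x - x * (1 - gcdf v x)

open ProbabilityTheory Set Filter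
open scoped ENNReal NNReal Topology

lemma setLIntegral_Iio_measure_Ioi_mul (μ ν : Measure ℝ) [SFinite ν] (q r : ℝ) :
    ∫⁻ x in Iio 0, μ (Ioi (q - x)) * ν (Ioi (r - x))
      = ∫⁻ p, ENNReal.ofReal (min (p.1 - q) (p.2 - r)) ∂μ.prod ν := by
  have hlevel (t : ℝ) (ht : 0 < t) :
      {p : ℝ × ℝ | t < max (min (p.1 - q) (p.2 - r)) 0} = Ioi (q + t) ×ˢ Ioi (r + t) := by
    ext p
    simp only [mem_ofPred_eq, mem_prod, mem_Ioi, lt_max_iff, lt_min_iff, ht.not_gt, or_false]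
    constructor <;> rintro ⟨h1, h2⟩ <;> constructor <;> linarith
  have hpos (p : ℝ × ℝ) : ENNReal.ofReal (min (p.1 - q) (p.2 - r))
      = ENNReal.ofReal (max (min (p.1 - q) (p.2 - r)) 0) := by simp
  rw [lintegral_congr hpos,
    lintegral_eq_lintegral_meas_lt (f := fun p : ℝ × ℝ => max (min (p.1 - q) (p.2 - r)) 0) _
      (ae_of_all _ fun _ => le_max_right _ _) (by fun_prop),
    ← (Measure.measurePreserving_neg volume).setLIntegral_comp_preimage_emb
      measurableEmbedding_neg, Set.neg_preimage, Set.neg_Iio, neg_zero]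
  refine setLIntegral_congr_fun measurableSet_Ioi fun t ht => ?_
  rw [hlevel t ht, Measure.prod_prod, sub_neg_eq_add, sub_neg_eq_add]

lemma setLIntegral_Ioi_measure_Iic_mul (μ ν : Measure ℝ) [SFinite ν] (q r : ℝ) :
    ∫⁻ x in Ioi 0, μ (Iic (q - x)) * ν (Iic (r - x))
      = ∫⁻ p, ENNReal.ofReal (min (q - p.1) (r - p.2)) ∂μ.prod ν := by
  have hlevel (t : ℝ) (ht : 0 < t) :
      {p : ℝ × ℝ | t ≤ max (min (q - p.1) (r - p.2)) 0} = Iic (q - t) ×ˢ Iic (r - t) := by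
    ext p
    simp only [mem_ofPred_eq, mem_prod, mem_Iic, le_max_iff, le_min_iff, ht.not_ge, or_false]
    constructor <;> rintro ⟨h1, h2⟩ <;> constructor <;> linarith
  have hpos (p : ℝ × ℝ) : ENNReal.ofReal (min (q - p.1) (r - p.2))
      = ENNReal.ofReal (max (min (q - p.1) (r - p.2)) 0) := by simp
  rw [lintegral_congr hpos,
    lintegral_eq_lintegral_meas_le (f := fun p : ℝ × ℝ => max (min (q - p.1) (r - p.2)) 0) _
      (ae_of_all _ fun _ => le_max_right _ _) (by fun_prop)]
  refine setLIntegral_congr_fun measurableSet_Ioi fun t ht => ?_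
  rw [hlevel t ht, Measure.prod_prod]

lemma measurable_measure_Ioi_sub (μ : Measure ℝ) (c : ℝ) :
    Measurable fun x => μ (Ioi (c - x)) :=
  Monotone.measurable fun _ _ h => measure_mono (Ioi_subset_Ioi (by linarith))

lemma measurable_measure_Iic_sub (μ : Measure ℝ) (c : ℝ) :
    Measurable fun x => μ (Iic (c - x)) :=
  Antitone.measurable fun _ _ h => measure_mono (Iic_subset_Iic.2 (by linarith))

lemma ofReal_min_add_ofReal_min_neg_add_ofReal_sub (a b : ℝ) :
    ENNReal.ofReal (min a b) + ENNReal.ofReal (min (-a) (-b)) + ENNReal.ofReal (b - a)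
      = ENNReal.ofReal (-a) + ENNReal.ofReal b := by
  rcases le_total a 0 with ha | ha <;> rcases le_total b 0 with hb | hb <;>
    rcases le_total a b with hab | hab <;>
    simp [ha, hb, hab, ENNReal.ofReal_of_nonpos, ← ENNReal.ofReal_add] <;> linarith

lemma setLIntegral_measure_Ioi_mul_add_setLIntegral_measure_Iic_mul (μ ν : Measure ℝ)
    [IsProbabilityMeasure μ] [IsProbabilityMeasure ν] (q r : ℝ) :
    (∫⁻ x in Iio 0, μ (Ioi (q - x)) * ν (Ioi (r - x)))
      + (∫⁻ x in Ioi 0, μ (Iic (q - x)) * ν (Iic (r - x)))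
      + ∫⁻ p, ENNReal.ofReal (p.2 - p.1 - (r - q)) ∂μ.prod ν
      = (∫⁻ y, ENNReal.ofReal (q - y) ∂μ) + ∫⁻ z, ENNReal.ofReal (z - r) ∂ν := by
  rw [setLIntegral_Iio_measure_Ioi_mul, setLIntegral_Ioi_measure_Iic_mul,
    ← lintegral_add_left (by fun_prop), ← lintegral_add_left (by fun_prop),
    ← (measurePreserving_fst (μ := μ) (ν := ν)).lintegral_comp (by fun_prop),
    ← (measurePreserving_snd (μ := μ) (ν := ν)).lintegral_comp (by fun_prop),
    ← lintegral_add_left (by fun_prop)]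
  refine lintegral_congr fun p => ?_
  convert ofReal_min_add_ofReal_min_neg_add_ofReal_sub (p.1 - q) (p.2 - r) using 3 <;> ring_nf

lemma gaussianReal_map_snd_sub_fst {m₁ m₂ : ℝ} {v₁ v₂ : ℝ≥0} :
    ((gaussianReal m₁ v₁).prod (gaussianReal m₂ v₂)).map (fun p => p.2 - p.1)
      = gaussianReal (m₂ - m₁) (v₁ + v₂) := by
  have hindep := (indepFun_prod (μ := gaussianReal m₁ v₁) (ν := gaussianReal m₂ v₂)
    measurable_neg measurable_id).symm
  have hsnd : ((gaussianReal m₁ v₁).prod (gaussianReal m₂ v₂)).map (fun p => p.2)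
      = gaussianReal m₂ v₂ := measurePreserving_snd.map_eq
  have hneg : ((gaussianReal m₁ v₁).prod (gaussianReal m₂ v₂)).map (fun p => -p.1)
      = gaussianReal (-m₁) v₁ := by
    rw [← Function.comp_def Neg.neg Prod.fst, ← Measure.map_map measurable_neg measurable_fst,
      measurePreserving_fst.map_eq, gaussianReal_map_neg]
  rw [sub_eq_add_neg, add_comm v₁]
  exact gaussianReal_add_gaussianReal_of_indepFun hindep hsnd hneg

lemma gpdf_eq_gaussianPDFReal {v : ℝ} (hv : 0 ≤ v) : gpdf v = gaussianPDFReal 0 v.toNNReal := by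
  ext x
  rw [gpdf, gaussianPDFReal, Real.coe_toNNReal _ hv, sub_zero, Real.sqrt_eq_rpow,
    ← rpow_neg (by positivity)]

lemma gpdf_nonneg {v : ℝ} (hv : 0 ≤ v) (x : ℝ) : 0 ≤ gpdf v x := by
  rw [gpdf_eq_gaussianPDFReal hv]
  exact gaussianPDFReal_nonneg _ _ _

lemma integrable_gpdf {v : ℝ} (hv : 0 ≤ v) : Integrable (gpdf v) := by
  rw [gpdf_eq_gaussianPDFReal hv]
  exact integrable_gaussianPDFReal _ _

lemma hasDerivAt_gpdf (v x : ℝ) : HasDerivAt (gpdf v) (-(x / v) * gpdf v x) x := by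
  have hexp : HasDerivAt (fun y : ℝ => -(y ^ 2) / (2 * v)) (-(2 * x) / (2 * v)) x := by
    simpa using ((hasDerivAt_pow 2 x).neg).div_const (2 * v)
  unfold gpdf
  exact (hexp.exp.const_mul _).congr_deriv (by ring)

lemma tendsto_gpdf_atTop {v : ℝ} (hv : 0 < v) : Tendsto (gpdf v) atTop (𝓝 0) := by
  have hexponent : Tendsto (fun y : ℝ => -(y ^ 2) / (2 * v)) atTop atBot := by
    simpa only [neg_div, Function.comp_def] using tendsto_neg_atTop_atBot.comp
      ((tendsto_pow_atTop two_ne_zero).atTop_div_const (by positivity : 0 < 2 * v))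
  unfold gpdf
  simpa using (tendsto_exp_atBot.comp hexponent).const_mul ((2 * π * v) ^ (-(1/2 : ℝ)))

lemma integrable_mul_gpdf {v : ℝ} (hv : 0 < v) : Integrable (fun y => y * gpdf v y) := by
  convert (integrable_mul_exp_neg_mul_sq (b := (2 * v)⁻¹) (by positivity)).const_mul
    ((2 * π * v) ^ (-(1/2 : ℝ))) using 2 with y
  simp only [gpdf]; ring_nf

lemma setIntegral_Ioi_mul_gpdf {v : ℝ} (hv : 0 < v) (c : ℝ) :
    ∫ y in Ioi c, y * gpdf v y = v * gpdf v c := by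
  have hderiv (y : ℝ) (_ : y ∈ Ici c) :
      HasDerivAt (fun y => -v * gpdf v y) (y * gpdf v y) y := by
    refine ((hasDerivAt_gpdf v y).const_mul (-v)).congr_deriv ?_
    field_simp
  rw [integral_Ioi_of_hasDerivAt_of_tendsto' hderiv (integrable_mul_gpdf hv).integrableOn
    (by simpa using (tendsto_gpdf_atTop hv).const_mul (-v))]
  ring

lemma gaussianReal_real_eq_setIntegral_gpdf {v : ℝ} (hv : 0 < v) (S : Set ℝ) :
    (gaussianReal 0 v.toNNReal).real S = ∫ y in S, gpdf v y := by
  rw [measureReal_def, gaussianReal_apply_eq_integral _ (by simpa using hv),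
    gpdf_eq_gaussianPDFReal hv.le, ENNReal.toReal_ofReal]
  exact integral_nonneg fun y => gaussianPDFReal_nonneg _ _ _

lemma gcdf_eq_measureReal {v : ℝ} (hv : 0 < v) (c : ℝ) :
    gcdf v c = (gaussianReal 0 v.toNNReal).real (Iic c) :=
  (gaussianReal_real_eq_setIntegral_gpdf hv _).symm

lemma one_sub_gcdf_eq_measureReal {v : ℝ} (hv : 0 < v) (c : ℝ) :
    1 - gcdf v c = (gaussianReal 0 v.toNNReal).real (Ioi c) := by
  rw [gcdf_eq_measureReal hv, ← probReal_compl_eq_one_sub measurableSet_Iic, compl_Iic]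

lemma setIntegral_Ioi_sub_mul_gpdf {v : ℝ} (hv : 0 < v) (c : ℝ) :
    ∫ y in Ioi c, (y - c) * gpdf v y = gPsi v c := by
  simp_rw [sub_mul]
  rw [integral_sub (integrable_mul_gpdf hv).integrableOn
      ((integrable_gpdf hv.le).const_mul c).integrableOn,
    integral_const_mul, setIntegral_Ioi_mul_gpdf hv, gPsi, one_sub_gcdf_eq_measureReal hv,
    gaussianReal_real_eq_setIntegral_gpdf hv]

lemma gPsi_nonneg {v : ℝ} (hv : 0 < v) (c : ℝ) : 0 ≤ gPsi v c := by
  rw [← setIntegral_Ioi_sub_mul_gpdf hv]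
  refine setIntegral_nonneg measurableSet_Ioi fun y hy => ?_
  exact mul_nonneg (sub_nonneg.2 (le_of_lt hy)) (gpdf_nonneg hv.le y)

lemma lintegral_ofReal_sub_gaussianReal {v : ℝ} (hv : 0 < v) (c : ℝ) :
    ∫⁻ y, ENNReal.ofReal (y - c) ∂gaussianReal 0 v.toNNReal = ENNReal.ofReal (gPsi v c) := by
  have hv' : v.toNNReal ≠ 0 := by simpa using hv
  have hdens (y : ℝ) : (gaussianPDF 0 v.toNNReal * fun y => ENNReal.ofReal (y - c)) y
      = (Ioi c).indicator (fun y => ENNReal.ofReal ((y - c) * gpdf v y)) y := by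
    rcases lt_or_ge c y with h | h
    · rw [indicator_of_mem (mem_Ioi.2 h), Pi.mul_apply, gaussianPDF,
        gpdf_eq_gaussianPDFReal hv.le, mul_comm, ENNReal.ofReal_mul (sub_nonneg.2 h.le)]
    · rw [indicator_of_notMem (notMem_Ioi.2 h), Pi.mul_apply,
        ENNReal.ofReal_of_nonpos (sub_nonpos.2 h), mul_zero]
  rw [gaussianReal_of_var_ne_zero _ hv', lintegral_withDensity_eq_lintegral_mul _
    (measurable_gaussianPDF _ _) (by fun_prop), lintegral_congr hdens,
    lintegral_indicator measurableSet_Ioi, ← setIntegral_Ioi_sub_mul_gpdf hv]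
  have hint : Integrable (fun y => (y - c) * gpdf v y) := by
    simpa only [sub_mul, Pi.sub_def] using
      (integrable_mul_gpdf hv).sub ((integrable_gpdf hv.le).const_mul c)
  refine (ofReal_integral_eq_lintegral_ofReal hint.integrableOn ?_).symm
  exact ae_restrict_of_forall_mem measurableSet_Ioi fun y hy =>
    mul_nonneg (sub_nonneg.2 (le_of_lt hy)) (gpdf_nonneg hv.le y)

lemma lintegral_ofReal_const_sub_gaussianReal {v : ℝ} (hv : 0 < v) (c : ℝ) :
    ∫⁻ y, ENNReal.ofReal (c - y) ∂gaussianReal 0 v.toNNReal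
      = ENNReal.ofReal (gPsi v (-c)) := by
  have hneg : MeasurePreserving (fun x => -x) (gaussianReal 0 v.toNNReal)
      (gaussianReal 0 v.toNNReal) := ⟨measurable_neg, by rw [gaussianReal_map_neg, neg_zero]⟩
  rw [← lintegral_ofReal_sub_gaussianReal hv,
    ← hneg.lintegral_comp (f := fun y => ENNReal.ofReal (y - -c)) (by fun_prop)]
  simp only [sub_neg_eq_add, neg_add_eq_sub]

lemma ENNReal.toReal_add_toReal_of_add_ofReal_eq {a b : ℝ≥0∞} {x y z : ℝ} (hx : 0 ≤ x)
    (hy : 0 ≤ y) (hz : 0 ≤ z)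
    (h : a + b + ENNReal.ofReal z = ENNReal.ofReal x + ENNReal.ofReal y) :
    a.toReal + b.toReal = x + y - z := by
  have hfin : a + b + ENNReal.ofReal z ≠ ∞ := h ▸ by finiteness
  obtain ⟨ha, hb⟩ := ENNReal.add_ne_top.1 (ENNReal.add_ne_top.1 hfin).1
  have := congrArg ENNReal.toReal h
  rw [ENNReal.toReal_add (by finiteness) ENNReal.ofReal_ne_top, ENNReal.toReal_add ha hb,
    ENNReal.toReal_add ENNReal.ofReal_ne_top ENNReal.ofReal_ne_top, ENNReal.toReal_ofReal hx,
    ENNReal.toReal_ofReal hy, ENNReal.toReal_ofReal hz] at this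
  linarith

/-- The covariance kernel `Γ₂` identity: for Brownian motion `B` (`P(B_v ≤ a)` is
the Gaussian cdf `Φ_v(a)`),
`∫_{−∞}^0 P(B_{σ²s} > q−x)P(B_{σ²t} > r−x) dx + ∫_0^∞ P(B_{σ²s} ≤ q−x)P(B_{σ²t} ≤ r−x) dx
  = Ψ_{σ²s}(−q) + Ψ_{σ²t}(r) − Ψ_{σ²(t+s)}(r−q)`. -/
theorem gamma2_identity (σ2 s t q r : ℝ) (hσ : 0 < σ2) (hs : 0 < s) (ht : 0 < t) :
    (∫ x in Set.Iio (0:ℝ),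
        (1 - gcdf (σ2 * s) (q - x)) * (1 - gcdf (σ2 * t) (r - x)))
      + (∫ x in Set.Ioi (0:ℝ), gcdf (σ2 * s) (q - x) * gcdf (σ2 * t) (r - x))
      = gPsi (σ2 * s) (-q) + gPsi (σ2 * t) r - gPsi (σ2 * (t + s)) (r - q) := by
  have hu : 0 < σ2 * s := mul_pos hσ hs
  have hv : 0 < σ2 * t := mul_pos hσ ht
  set γu := gaussianReal 0 (σ2 * s).toNNReal
  set γv := gaussianReal 0 (σ2 * t).toNNReal
  have hdiff :
      (γu.prod γv).map (fun p => p.2 - p.1) = gaussianReal 0 (σ2 * (t + s)).toNNReal := by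
    rw [gaussianReal_map_snd_sub_fst, sub_zero, ← Real.toNNReal_add hu.le hv.le]
    ring_nf
  have hkey := setLIntegral_measure_Ioi_mul_add_setLIntegral_measure_Iic_mul γu γv q r
  rw [← lintegral_map (f := fun y => ENNReal.ofReal (y - (r - q)))
      (g := fun p : ℝ × ℝ => p.2 - p.1) (by fun_prop) (by fun_prop), hdiff,
    lintegral_ofReal_sub_gaussianReal (by positivity), lintegral_ofReal_const_sub_gaussianReal hu,
    lintegral_ofReal_sub_gaussianReal hv] at hkey
  simp only [one_sub_gcdf_eq_measureReal hu, one_sub_gcdf_eq_measureReal hv]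
  simp only [gcdf_eq_measureReal hu, gcdf_eq_measureReal hv, measureReal_def,
    ← ENNReal.toReal_mul]
  rw [integral_toReal
      ((measurable_measure_Ioi_sub _ _).fun_mul (measurable_measure_Ioi_sub _ _)).aemeasurable
      (ae_of_all _ fun _ => by finiteness),
    integral_toReal
      ((measurable_measure_Iic_sub _ _).fun_mul (measurable_measure_Iic_sub _ _)).aemeasurable
      (ae_of_all _ fun _ => by finiteness)]
  exact ENNReal.toReal_add_toReal_of_add_ofReal_eq (gPsi_nonneg hu _) (gPsi_nonneg hv _)
    (gPsi_nonneg (by positivity) _) hkey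
end

section
/- Let Z(t,r) be the mean-zero Gaussian process on ℝ_+ × ℝ with covariance E[Z(s,q)Z(t,r)] = (σ_ξ²/σ₁²)Γ₁((s,q),(t,r)) + ϱ₀Γ₂((s,q),(t,r)) where Γ₁, Γ₂ are as defined via Ψ. If ϱ₀ = σ_ξ²/σ₁², then the restriction t ↦ Z(t,0) has covariance E[Z(s,0)Z(t,0)] = (σ_ξ²/√(2πσ₁²)) (√s + √t − √|t−s|); i.e., Z(·,0) is a constant multiple of fractional Brownian motion with Hurst parameter 1/4. -/
open MeasureTheory ProbabilityTheory Real

/-- `Γ₁((s,q),(t,r)) = Ψ_{σ₁²(t+s)}(r−q) − Ψ_{σ₁²|t−s|}(r−q)`. -/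
noncomputable def Gamma1 (σ1sq s q t r : ℝ) : ℝ :=
  gPsi (σ1sq * (t + s)) (r - q) - gPsi (σ1sq * |t - s|) (r - q)

/-- `Γ₂((s,q),(t,r)) = Ψ_{σ₁²s}(−q) + Ψ_{σ₁²t}(r) − Ψ_{σ₁²(t+s)}(r−q)`. -/
noncomputable def Gamma2 (σ1sq s q t r : ℝ) : ℝ :=
  gPsi (σ1sq * s) (-q) + gPsi (σ1sq * t) r - gPsi (σ1sq * (t + s)) (r - q)

lemma gPsi_zero {v : ℝ} (hv : 0 ≤ v) : gPsi v 0 = √v / √(2 * π) := by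
  rcases hv.eq_or_lt with rfl | hv
  · simp [gPsi, gpdf]
  · have h2πv : 0 < 2 * π * v := by positivity
    rw [gPsi, gpdf, rpow_neg h2πv.le, ← sqrt_eq_rpow, sqrt_mul (by positivity)]
    field_simp
    simp [sq_sqrt hv.le]

lemma sqrt_mul_sq_eq {c : ℝ} (hc : 0 ≤ c) (x : ℝ) : √(c ^ 2 * x) = c * √x := by
  rw [sqrt_mul (sq_nonneg c), sqrt_sq hc]

section OnAxis

variable {c s t : ℝ} (hs : 0 ≤ s) (ht : 0 ≤ t)
include hs ht

lemma Gamma1_zero_zero (hc : 0 ≤ c) :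
    Gamma1 c s 0 t 0 = (√(c * (t + s)) - √(c * |t - s|)) / √(2 * π) := by
  rw [Gamma1, sub_zero, gPsi_zero (by positivity), gPsi_zero (by positivity)]
  ring

lemma Gamma2_zero_zero (hc : 0 ≤ c) :
    Gamma2 c s 0 t 0 = (√(c * s) + √(c * t) - √(c * (t + s))) / √(2 * π) := by
  rw [Gamma2, neg_zero, sub_zero, gPsi_zero (by positivity), gPsi_zero (by positivity),
    gPsi_zero (by positivity)]
  ring

/-- With equal weights the `Ψ_{σ₁²(t+s)}` terms of `Γ₁` and `Γ₂` cancel. -/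
lemma Gamma1_add_Gamma2_zero_zero (σ1 : ℝ) (hσ1 : 0 ≤ σ1) :
    Gamma1 (σ1 ^ 2) s 0 t 0 + Gamma2 (σ1 ^ 2) s 0 t 0
      = σ1 * (√s + √t - √|t - s|) / √(2 * π) := by
  rw [Gamma1_zero_zero hs ht (sq_nonneg σ1), Gamma2_zero_zero hs ht (sq_nonneg σ1)]
  simp only [sqrt_mul_sq_eq hσ1]
  ring

end OnAxis

theorem fbm_quarter_covariance_general
    {Ω : Type*} [MeasureSpace Ω]
    (σξ σ1 ϱ0 : ℝ) (hσ1 : 0 < σ1)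
    (Z : ℝ × ℝ → Ω → ℝ)
    (hcov : ∀ s q t r : ℝ, 0 ≤ s → 0 ≤ t →
      ∫ ω, Z (s, q) ω * Z (t, r) ω
        = (σξ^2 / σ1^2) * Gamma1 (σ1^2) s q t r + ϱ0 * Gamma2 (σ1^2) s q t r)
    (hϱ : ϱ0 = σξ^2 / σ1^2)
    (s t : ℝ) (hs : 0 < s) (ht : 0 < t) :
    ∫ ω, Z (s, 0) ω * Z (t, 0) ω
      = (σξ^2 / Real.sqrt (2 * π * σ1^2)) *
          (Real.sqrt s + Real.sqrt t - Real.sqrt |t - s|) := by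
  rw [hcov s 0 t 0 hs.le ht.le, hϱ, ← mul_add,
    Gamma1_add_Gamma2_zero_zero hs.le ht.le σ1 hσ1.le, mul_comm (2 * π),
    sqrt_mul_sq_eq hσ1.le]
  field_simp

/-- If a mean-zero process `Z` has covariance
`E[Z(s,q)Z(t,r)] = (σ_ξ²/σ₁²)Γ₁ + ϱ₀Γ₂` and `ϱ₀ = σ_ξ²/σ₁²`, then on the line
`r = 0` its covariance is that of fractional Brownian motion with Hurst 1/4:
`E[Z(s,0)Z(t,0)] = (σ_ξ²/√(2πσ₁²))(√s + √t − √|t−s|)`. -/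
theorem fbm_quarter_covariance
    {Ω : Type*} [MeasureSpace Ω] [IsProbabilityMeasure (ℙ : Measure Ω)]
    (σξ σ1 ϱ0 : ℝ) (hσξ : 0 < σξ) (hσ1 : 0 < σ1)
    (Z : ℝ × ℝ → Ω → ℝ)
    (hmean : ∀ s q, ∫ ω, Z (s, q) ω = 0)
    (hcov : ∀ s q t r : ℝ, 0 ≤ s → 0 ≤ t →
      ∫ ω, Z (s, q) ω * Z (t, r) ω
        = (σξ^2 / σ1^2) * Gamma1 (σ1^2) s q t r + ϱ0 * Gamma2 (σ1^2) s q t r)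
    (hϱ : ϱ0 = σξ^2 / σ1^2)
    (s t : ℝ) (hs : 0 < s) (ht : 0 < t) :
    ∫ ω, Z (s, 0) ω * Z (t, 0) ω
      = (σξ^2 / Real.sqrt (2 * π * σ1^2)) *
          (Real.sqrt s + Real.sqrt t - Real.sqrt |t - s|) :=
  fbm_quarter_covariance_general σξ σ1 ϱ0 hσ1 Z hcov hϱ s t hs ht
end
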